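/- arXiv:2302.05743 — 2 statements merged into one kernel-verified Lean document; each statement's English description precedes it below -/
import Mathlib

section
/- Let n be a natural number and let x, y : Fin n → EuclideanSpace ℝ (Fin 3) be point configurations such that dist (x i) (x j) = dist (y i) (y j) for all i, j ∈ Fin n. Then there exists a bijective isometry f of EuclideanSpace ℝ (Fin 3) such that y i = f (x i) for all i. (Reconstruction of the configuration, up to a rigid motion, from its distance matrix.) -/
/-!
Translating by a base point `x k` and `y k`, distance equalities become equalities of the Gram
matrices of the difference vectors (polarization). Equal Gram matrices give
`‖∑ cᵢ uᵢ‖ = ‖∑ cᵢ wᵢ‖`, so `uᵢ ↦ wᵢ` is a well-defined linear isometry on the span of the `uᵢ`;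
in finite dimension it extends to a linear isometry of the whole space.
-/

open scoped InnerProductSpace Congruent
open Submodule Set Finsupp

section
variable {𝕜 ι V W : Type*} [RCLike 𝕜] [NormedAddCommGroup V] [InnerProductSpace 𝕜 V]
  [NormedAddCommGroup W] [InnerProductSpace 𝕜 W] {u : ι → V} {w : ι → W}

theorem inner_linearCombination_eq_of_inner_eq (h : ∀ i j, ⟪u i, u j⟫_𝕜 = ⟪w i, w j⟫_𝕜)
    (c d : ι →₀ 𝕜) :
    ⟪linearCombination 𝕜 u c, linearCombination 𝕜 u d⟫_𝕜 =
      ⟪linearCombination 𝕜 w c, linearCombination 𝕜 w d⟫_𝕜 := by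
  simp [linearCombination_apply, Finsupp.sum_inner, Finsupp.inner_sum, inner_smul_left,
    inner_smul_right, h]

theorem norm_linearCombination_eq_of_inner_eq (h : ∀ i j, ⟪u i, u j⟫_𝕜 = ⟪w i, w j⟫_𝕜)
    (c : ι →₀ 𝕜) : ‖linearCombination 𝕜 u c‖ = ‖linearCombination 𝕜 w c‖ := by
  rw [@norm_eq_sqrt_re_inner 𝕜, @norm_eq_sqrt_re_inner 𝕜,
    inner_linearCombination_eq_of_inner_eq h]

theorem exists_linearIsometry_of_inner_eq (h : ∀ i j, ⟪u i, u j⟫_𝕜 = ⟪w i, w j⟫_𝕜) :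
    ∃ L : span 𝕜 (range u) →ₗᵢ[𝕜] W, ∀ i, L ⟨u i, subset_span (mem_range_self i)⟩ = w i := by
  set f := linearCombination 𝕜 u
  have hnorm := norm_linearCombination_eq_of_inner_eq h
  have hker : LinearMap.ker f ≤ LinearMap.ker (linearCombination 𝕜 w) := fun c hc => by
    rw [LinearMap.mem_ker, ← norm_eq_zero, ← hnorm, norm_eq_zero]
    exact hc
  let L : LinearMap.range f →ₗ[𝕜] W :=
    (LinearMap.ker f).liftQ _ hker ∘ₗ f.quotKerEquivRange.symm.toLinearMap
  have hL : ∀ c, L ⟨f c, LinearMap.mem_range_self f c⟩ = linearCombination 𝕜 w c := fun c => by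
    simp [L]
  let L' : LinearMap.range f →ₗᵢ[𝕜] W :=
    { toLinearMap := L
      norm_map' := by
        rintro ⟨_, c, rfl⟩
        rw [hL, coe_norm, ← hnorm] }
  have hspan : LinearMap.range f = span 𝕜 (range u) := range_linearCombination 𝕜
  refine ⟨L'.comp (LinearIsometryEquiv.ofEq _ _ hspan.symm).toLinearIsometry, fun i => ?_⟩
  have hLi := hL (single i 1)
  simp only [f, linearCombination_single, one_smul] at hLi
  exact hLi

end

theorem exists_linearIsometryEquiv_of_inner_eq {𝕜 ι V : Type*} [RCLike 𝕜] [NormedAddCommGroup V]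
    [InnerProductSpace 𝕜 V] [FiniteDimensional 𝕜 V] {u w : ι → V}
    (h : ∀ i j, ⟪u i, u j⟫_𝕜 = ⟪w i, w j⟫_𝕜) : ∃ L : V ≃ₗᵢ[𝕜] V, ∀ i, L (u i) = w i := by
  obtain ⟨L, hL⟩ := exists_linearIsometry_of_inner_eq h
  exact ⟨L.extend.toLinearIsometryEquiv rfl, fun i => (L.extend_apply _).trans (hL i)⟩

namespace Congruent

variable {ι V₁ V₂ P₁ P₂ : Type*} [NormedAddCommGroup V₁] [InnerProductSpace ℝ V₁] [MetricSpace P₁]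
  [NormedAddTorsor V₁ P₁] [NormedAddCommGroup V₂] [InnerProductSpace ℝ V₂] [MetricSpace P₂]
  [NormedAddTorsor V₂ P₂]

theorem inner_vsub_vsub_eq {x : ι → P₁} {y : ι → P₂} (h : x ≅ y) (i j k : ι) :
    ⟪x i -ᵥ x k, x j -ᵥ x k⟫_ℝ = ⟪y i -ᵥ y k, y j -ᵥ y k⟫_ℝ := by
  simp_rw [real_inner_eq_norm_mul_self_add_norm_mul_self_sub_norm_sub_mul_self_div_two,
    vsub_sub_vsub_cancel_right, ← dist_eq_norm_vsub, h.dist_eq]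

theorem exists_affineIsometryEquiv [FiniteDimensional ℝ V₁] {x y : ι → P₁} (h : x ≅ y) :
    ∃ f : P₁ ≃ᵃⁱ[ℝ] P₁, ∀ i, f (x i) = y i := by
  cases isEmpty_or_nonempty ι with
  | inl => exact ⟨AffineIsometryEquiv.refl ℝ P₁, isEmptyElim⟩
  | inr =>
    obtain ⟨k⟩ := ‹Nonempty ι›
    obtain ⟨L, hL⟩ := exists_linearIsometryEquiv_of_inner_eq (h.inner_vsub_vsub_eq · · k)
    refine ⟨(AffineIsometryEquiv.vaddConst ℝ (x k)).symm.trans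
      (L.toAffineIsometryEquiv.trans (AffineIsometryEquiv.vaddConst ℝ (y k))), fun i => ?_⟩
    simp [hL]

end Congruent

/-- If two point configurations in `ℝ³` have the same distance matrix,
then there is a bijective isometry of `ℝ³` carrying one onto the other
(reconstruction of the configuration, up to a rigid motion, from its distance matrix). -/
theorem exists_isometryEquiv_of_dist_eq (n : ℕ)
    (x y : Fin n → EuclideanSpace ℝ (Fin 3))
    (h : ∀ i j, dist (x i) (x j) = dist (y i) (y j)) :
    ∃ f : EuclideanSpace ℝ (Fin 3) ≃ᵢ EuclideanSpace ℝ (Fin 3),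
      ∀ i, y i = f (x i) := by
  obtain ⟨f, hf⟩ := (congruent_iff_dist_eq.2 h).exists_affineIsometryEquiv
  exact ⟨f.toIsometryEquiv, fun i => (hf i).symm⟩
end

section
/- There exist injective point configurations x, y : Fin 10 → EuclideanSpace ℝ (Fin 3) and a single multiset M of real numbers such that: (1) for every i ∈ Fin 10, the multiset {dist (x i) (x j) : j ∈ Fin 10} equals M, and for every i ∈ Fin 10, the multiset {dist (y i) (y j) : j ∈ Fin 10} equals M; yet (2) x and y are not congruent, i.e., there is no permutation σ of Fin 10 with dist (x i) (x j) = dist (y (σ i)) (y (σ j)) for all i, j. (Such a pair can be obtained from two 10-vertex subsets of a regular dodecahedron, one containing two regular pentagons and the other forming a ring.) -/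
/-!
Scale a regular dodecahedron so that its vertices are `(±2, ±2, ±2)` and the cyclic
permutations of `(0, ±(√5 - 1), ±(√5 + 1))`; all coordinates then lie in `ℤ[√5]`.
Let `x` be the ten vertices of two opposite faces and `y` the remaining ten, which form a
skew (Petrie) decagon. Exact arithmetic in `ℤ[√5]` shows that every vertex of either set has
the same list of squared distances. Since `ℤ[√5] → ℝ` is injective, real distances agree
exactly when these squared distances agree, so a congruence would carry the triangle formed
by an edge and two diagonals of a face of `x` to such a triangle in `y`, and `y` has none.
-/

open Finset Function

section Realization

variable {R ι : Type*} [CommRing R] (f : R →+* ℝ)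

noncomputable def realize (p : ι → R) : EuclideanSpace ℝ ι := WithLp.toLp 2 (f ∘ p)

theorem realize_injective {f : R →+* ℝ} (hf : Injective f) :
    Injective (realize f : (ι → R) → _) :=
  fun _ _ h => hf.comp_left (WithLp.toLp_injective 2 h)

variable [Fintype ι]

def sqDist (p q : ι → R) : R := ∑ k, (p k - q k) ^ 2

theorem map_sqDist (p q : ι → R) : f (sqDist p q) = dist (realize f p) (realize f q) ^ 2 := by
  rw [EuclideanSpace.dist_eq, Real.sq_sqrt (by positivity), sqDist, map_sum]
  simp [realize, Real.dist_eq, sq_abs]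

theorem dist_realize (p q : ι → R) : dist (realize f p) (realize f q) = √(f (sqDist p q)) := by
  rw [map_sqDist, Real.sqrt_sq dist_nonneg]

variable {f}

theorem dist_realize_eq_dist_realize_iff (hf : Injective f) {p q p' q' : ι → R} :
    dist (realize f p) (realize f q) = dist (realize f p') (realize f q') ↔
      sqDist p q = sqDist p' q' := by
  rw [← hf.eq_iff, map_sqDist, map_sqDist, pow_left_inj₀ dist_nonneg dist_nonneg two_ne_zero]

variable (f)

theorem map_dist_realize {κ : Type*} [Fintype κ] (p : κ → ι → R) (i : κ) :
    (univ.val.map fun j => dist (realize f (p i)) (realize f (p j))) =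
      (univ.val.map fun j => sqDist (p i) (p j)).map fun r => √(f r) := by
  simp only [Multiset.map_map, comp_def, dist_realize]

end Realization

noncomputable def sqrtFiveEmbedding : ℤ√5 →+* ℝ :=
  Zsqrtd.lift ⟨√5, by rw [Real.mul_self_sqrt (by norm_num)]; norm_num⟩

theorem sqrtFiveEmbedding_injective : Injective sqrtFiveEmbedding :=
  Zsqrtd.lift_injective _ fun n h => by
    have : n ≤ 2 := by nlinarith
    have : -2 ≤ n := by nlinarith
    interval_cases n <;> omega

namespace Dodecahedron

/-- `⟨a, b⟩` is `a + b√5`; the faces are the pentagons `0 4 2 7 5` and `1 6 9 3 8`. -/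
def twoFaces : Fin 10 → Fin 3 → ℤ√5 :=
  ![![⟨2, 0⟩, ⟨2, 0⟩, ⟨2, 0⟩], ![⟨2, 0⟩, ⟨-2, 0⟩, ⟨-2, 0⟩], ![⟨-2, 0⟩, ⟨2, 0⟩, ⟨2, 0⟩],
    ![⟨-2, 0⟩, ⟨-2, 0⟩, ⟨-2, 0⟩], ![⟨0, 0⟩, ⟨-1, 1⟩, ⟨1, 1⟩], ![⟨-1, 1⟩, ⟨1, 1⟩, ⟨0, 0⟩],
    ![⟨-1, 1⟩, ⟨-1, -1⟩, ⟨0, 0⟩], ![⟨1, -1⟩, ⟨1, 1⟩, ⟨0, 0⟩], ![⟨0, 0⟩, ⟨1, -1⟩, ⟨-1, -1⟩],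
    ![⟨1, -1⟩, ⟨-1, -1⟩, ⟨0, 0⟩]]

def petrieDecagon : Fin 10 → Fin 3 → ℤ√5 :=
  ![![⟨2, 0⟩, ⟨2, 0⟩, ⟨-2, 0⟩], ![⟨2, 0⟩, ⟨-2, 0⟩, ⟨2, 0⟩], ![⟨-2, 0⟩, ⟨2, 0⟩, ⟨-2, 0⟩],
    ![⟨-2, 0⟩, ⟨-2, 0⟩, ⟨2, 0⟩], ![⟨1, 1⟩, ⟨0, 0⟩, ⟨-1, 1⟩], ![⟨0, 0⟩, ⟨-1, 1⟩, ⟨-1, -1⟩],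
    ![⟨-1, -1⟩, ⟨0, 0⟩, ⟨-1, 1⟩], ![⟨0, 0⟩, ⟨1, -1⟩, ⟨1, 1⟩], ![⟨1, 1⟩, ⟨0, 0⟩, ⟨1, -1⟩],
    ![⟨-1, -1⟩, ⟨0, 0⟩, ⟨1, -1⟩]]

def sqDistList : Multiset (ℤ√5) :=
  {0, ⟨16, 0⟩, ⟨16, 0⟩, ⟨24, -8⟩, ⟨24, -8⟩, ⟨24, 8⟩, ⟨24, 8⟩, ⟨32, 0⟩, ⟨32, 0⟩, ⟨48, 0⟩}

/-- `24 - 8√5` and `16` are the squared edge and face diagonal of the dodecahedron. -/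
def IsFaceTriangle (p : Fin 10 → Fin 3 → ℤ√5) (a b c : Fin 10) : Prop :=
  sqDist (p a) (p b) = ⟨16, 0⟩ ∧ sqDist (p a) (p c) = ⟨24, -8⟩ ∧ sqDist (p b) (p c) = ⟨16, 0⟩

instance (p : Fin 10 → Fin 3 → ℤ√5) (a b c : Fin 10) : Decidable (IsFaceTriangle p a b c) := by
  unfold IsFaceTriangle; infer_instance

theorem twoFaces_injective : Injective twoFaces := by decide

theorem petrieDecagon_injective : Injective petrieDecagon := by decide

theorem map_sqDist_twoFaces (i : Fin 10) :
    (univ.val.map fun j => sqDist (twoFaces i) (twoFaces j)) = sqDistList := by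
  revert i; decide

theorem map_sqDist_petrieDecagon (i : Fin 10) :
    (univ.val.map fun j => sqDist (petrieDecagon i) (petrieDecagon j)) = sqDistList := by
  revert i; decide

theorem isFaceTriangle_twoFaces : IsFaceTriangle twoFaces 0 2 5 := by decide

theorem not_isFaceTriangle_petrieDecagon (a b c : Fin 10) :
    ¬ IsFaceTriangle petrieDecagon a b c := by
  revert a b c; decide

end Dodecahedron

open Dodecahedron in
/-- There are two injective 10-point configurations in `ℝ³` all of whose
nodes have the same unordered distance list `M`, yet the configurations are not
congruent. -/
theorem exists_noncongruent_ten_point_configs_with_same_distance_lists :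
    ∃ (x y : Fin 10 → EuclideanSpace ℝ (Fin 3)) (M : Multiset ℝ),
      Function.Injective x ∧ Function.Injective y ∧
      (∀ i : Fin 10,
        Multiset.map (fun j => dist (x i) (x j)) (Finset.univ : Finset (Fin 10)).val = M) ∧
      (∀ i : Fin 10,
        Multiset.map (fun j => dist (y i) (y j)) (Finset.univ : Finset (Fin 10)).val = M) ∧
      ¬ ∃ σ : Equiv.Perm (Fin 10),
          ∀ i j, dist (x i) (x j) = dist (y (σ i)) (y (σ j)) := by
  have hf := sqrtFiveEmbedding_injective
  refine ⟨realize sqrtFiveEmbedding ∘ twoFaces, realize sqrtFiveEmbedding ∘ petrieDecagon,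
    sqDistList.map fun r => √(sqrtFiveEmbedding r),
    (realize_injective hf).comp twoFaces_injective,
    (realize_injective hf).comp petrieDecagon_injective,
    fun i => ?_, fun i => ?_, ?_⟩
  · rw [← map_sqDist_twoFaces i]; exact map_dist_realize _ _ i
  · rw [← map_sqDist_petrieDecagon i]; exact map_dist_realize _ _ i
  rintro ⟨σ, hσ⟩
  have hsq (i j : Fin 10) : sqDist (twoFaces i) (twoFaces j) =
      sqDist (petrieDecagon (σ i)) (petrieDecagon (σ j)) :=
    (dist_realize_eq_dist_realize_iff hf).mp (hσ i j)
  obtain ⟨h02, h05, h25⟩ := isFaceTriangle_twoFaces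
  exact not_isFaceTriangle_petrieDecagon (σ 0) (σ 2) (σ 5)
    ⟨hsq 0 2 ▸ h02, hsq 0 5 ▸ h05, hsq 2 5 ▸ h25⟩
end
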